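/- arXiv:1602.03500 — 2 statements merged into one kernel-verified Lean document; each statement's English description precedes it below -/
import Mathlib

section
/- Let Q ≥ 1, g ∈ ℕ, Δ > 0, and α ∈ ℝ. Suppose that for every real β, the number of coprime pairs (b, q) with 1 ≤ b ≤ q², q ≤ Q, and ‖b/q² − β‖ ≤ gΔ is at most C·(Q/(gΔ))^ε·(Q³gΔ + Q^{1/2}). Then the number M(α) of triples (a, q) with 0 ≤ a ≤ gq² − 1, gcd(a, gq²) = 1, 1 ≤ q ≤ Q, and ‖a/(gq²) − α‖ ≤ Δ satisfies M(α) ≪ (1 + gΔ)(Q³gΔ + Q^{1/2})(QΔ^{−1})^ε, with implied constant depending only on C and ε. -/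
/-!
Reducing `a` modulo `q²` sends a reduced fraction `a / (g q²)` within `Δ` of `α` (modulo `1`) to a
reduced fraction `b / q²`, `1 ≤ b ≤ q²`, within `g Δ` of `g α`; the hypothesis at `β = g α` counts
these. The fractions over a given `(b, q)` are `(b / q² + n) / g`, `0 ≤ n < g`: `g` points spaced
`1 / g` apart modulo `1`, of which at most `2 g Δ + 1` lie within `Δ` of `α`. So `M(α)` is at most
`2 (1 + g Δ)` times the hypothesis' count, and `Q / (g Δ) ≤ Q / Δ` as `g ≥ 1`.
-/

/-- Distance from a real number to the nearest integer. -/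
noncomputable def nint (θ : ℝ) : ℝ := |θ - round θ|

lemma nint_le (θ : ℝ) (m : ℤ) : nint θ ≤ |θ - m| := round_le θ m

lemma nint_natCast_mul_le (n : ℕ) (θ : ℝ) : nint (n * θ) ≤ n * nint θ := by
  calc nint (n * θ) ≤ |n * θ - ((n * round θ : ℤ) : ℝ)| := nint_le _ _
    _ = |n * (θ - round θ)| := by push_cast; ring_nf
    _ = n * nint θ := by rw [abs_mul, Nat.abs_cast, nint]

lemma nint_natCast_div_sub_of_modEq {a b m : ℕ} (h : a ≡ b [MOD m]) (θ : ℝ) :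
    nint ((a : ℝ) / m - θ) = nint ((b : ℝ) / m - θ) := by
  obtain ⟨k, hk⟩ := Nat.modEq_iff_dvd.1 h
  rcases Nat.eq_zero_or_pos m with rfl | hm
  · simp
  have hb : (b : ℝ) / m - θ = ((a : ℝ) / m - θ) + k := by
    have : (b : ℝ) = a + m * k := by exact_mod_cast (by omega : (b : ℤ) = a + m * k)
    rw [this]; field_simp; ring
  rw [hb, nint, nint, round_add_intCast]; push_cast; ring_nf

lemma Int.card_Icc_ceil_floor_add_le (c L : ℝ) :
    (Finset.Icc ⌈c⌉ ⌊c + L⌋).card ≤ ⌊L⌋₊ + 1 := by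
  have h : ⌊c + L⌋ - ⌈c⌉ ≤ ⌊L⌋ :=
    Int.le_floor.2 (by push_cast; linarith [Int.floor_le (c + L), Int.le_ceil c])
  rw [Int.card_Icc, ← Int.floor_toNat]
  omega

def leastPosResidue (a m : ℕ) : ℕ := if a % m = 0 then m else a % m

section leastPosResidue

variable {a m : ℕ}

lemma leastPosResidue_pos (hm : 0 < m) : 0 < leastPosResidue a m := by
  unfold leastPosResidue; split_ifs <;> omega

lemma leastPosResidue_le (hm : 0 < m) : leastPosResidue a m ≤ m := by
  unfold leastPosResidue; split_ifs
  · rfl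
  · exact (Nat.mod_lt a hm).le

lemma leastPosResidue_modEq : leastPosResidue a m ≡ a [MOD m] := by
  unfold leastPosResidue; split_ifs with h
  · simp [Nat.ModEq, h]
  · exact Nat.mod_modEq a m

end leastPosResidue

theorem Set.ncard_le_mul_ncard_of_mapsTo {α β : Type*} {f : α → β} {s : Set α} {t : Set β}
    (hf : Set.MapsTo f s t) (ht : t.Finite) (n : ℕ)
    (hn : ∀ b ∈ t, {a ∈ s | f a = b}.ncard ≤ n) : s.ncard ≤ n * t.ncard := by
  classical
  obtain hs | hs := s.finite_or_infinite
  · lift s to Finset α using hs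
    lift t to Finset β using ht
    simp only [Set.ncard_coe_finset]
    refine Finset.card_le_mul_card_image_of_maps_to hf n fun b hb => ?_
    simpa [← Finset.coe_filter, Set.ncard_coe_finset] using hn b hb
  · simp [hs.ncard]

/-- `n ↦ n - g · round ((x + n) / g)` is injective on `n < g` and sends the `n` counted here into
the integers of an interval of length `2 g Δ`. -/
lemma ncard_equispaced_nint_le (x Δ : ℝ) (g : ℕ) :
    {n : ℕ | n < g ∧ nint ((x + n) / g) ≤ Δ}.ncard ≤ ⌊2 * g * Δ⌋₊ + 1 := by
  set shift : ℕ → ℤ := fun n => n - g * round ((x + n) / g)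
  have hmaps : ∀ n ∈ {n : ℕ | n < g ∧ nint ((x + n) / g) ≤ Δ},
      shift n ∈ (Finset.Icc ⌈-x - g * Δ⌉ ⌊-x - g * Δ + 2 * g * Δ⌋ : Set ℤ) := by
    rintro n ⟨hn, hnear⟩
    have hg : (0 : ℝ) < g := by exact_mod_cast n.zero_le.trans_lt hn
    have hdist : |x + (shift n : ℝ)| ≤ g * Δ := by
      have : x + (shift n : ℝ) = g * ((x + n) / g - round ((x + n) / g)) := by
        simp only [shift]; push_cast; field_simp; ring
      rw [this, abs_mul, Nat.abs_cast]
      exact mul_le_mul_of_nonneg_left hnear hg.le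
    rw [abs_le] at hdist
    simp only [Finset.coe_Icc, Set.mem_Icc, Int.ceil_le, Int.le_floor]
    constructor <;> linarith
  have hinj : Set.InjOn shift {n : ℕ | n < g ∧ nint ((x + n) / g) ≤ Δ} := by
    rintro n ⟨hn, -⟩ n' ⟨hn', -⟩ h
    have hmod : n ≡ n' [MOD g] :=
      Nat.modEq_iff_dvd.2 ⟨round ((x + n') / g) - round ((x + n) / g), by
        simp only [shift] at h; linear_combination -h⟩
    rwa [Nat.ModEq, Nat.mod_eq_of_lt hn, Nat.mod_eq_of_lt hn'] at hmod
  calc _ ≤ (Finset.Icc ⌈-x - g * Δ⌉ ⌊-x - g * Δ + 2 * g * Δ⌋ : Set ℤ).ncard :=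
        Set.ncard_le_ncard_of_injOn shift hmaps hinj
    _ ≤ ⌊2 * g * Δ⌋₊ + 1 := by
        rw [Set.ncard_coe_finset]; exact Int.card_Icc_ceil_floor_add_le _ _

lemma natCast_div_mul_sub_eq (a m g : ℕ) (hm : m ≠ 0) (hg : g ≠ 0) (α : ℝ) :
    (a : ℝ) / (g * m) - α = (((a % m : ℕ) : ℝ) / m - g * α + (a / m : ℕ)) / g := by
  have hdiv : (m : ℝ) * (a / m : ℕ) + (a % m : ℕ) = a := by exact_mod_cast Nat.div_add_mod a m
  field_simp
  linear_combination -hdiv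

/-- The set counted by the large sieve hypothesis; `gSqFracsNear g Q Δ α` is the set counted by
`M(α)`. -/
def sqFracsNear (Q δ β : ℝ) : Set (ℕ × ℕ) :=
  {p | 1 ≤ p.1 ∧ p.1 ≤ p.2 ^ 2 ∧ (p.2 : ℝ) ≤ Q ∧ Nat.Coprime p.1 (p.2 ^ 2) ∧
    nint ((p.1 : ℝ) / (p.2 : ℝ) ^ 2 - β) ≤ δ}

def gSqFracsNear (g : ℕ) (Q Δ α : ℝ) : Set (ℕ × ℕ) :=
  {p | p.1 < g * p.2 ^ 2 ∧ Nat.Coprime p.1 (g * p.2 ^ 2) ∧ 1 ≤ p.2 ∧ (p.2 : ℝ) ≤ Q ∧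
    nint ((p.1 : ℝ) / ((g : ℝ) * (p.2 : ℝ) ^ 2) - α) ≤ Δ}

lemma sqFracsNear_finite (Q δ β : ℝ) : (sqFracsNear Q δ β).Finite := by
  refine ((Set.finite_Icc 1 (⌊Q⌋₊ ^ 2)).prod (Set.finite_Icc 0 ⌊Q⌋₊)).subset ?_
  rintro ⟨b, q⟩ ⟨hb, hbq, hqQ, -⟩
  have hq : q ≤ ⌊Q⌋₊ := Nat.le_floor hqQ
  exact ⟨⟨hb, hbq.trans (Nat.pow_le_pow_left hq 2)⟩, q.zero_le, hq⟩

section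

variable {g : ℕ} {Q Δ α : ℝ}

lemma leastPosResidue_mem_sqFracsNear {p : ℕ × ℕ} (hp : p ∈ gSqFracsNear g Q Δ α) :
    (leastPosResidue p.1 (p.2 ^ 2), p.2) ∈ sqFracsNear Q (g * Δ) (g * α) := by
  obtain ⟨a, q⟩ := p
  obtain ⟨ha, hcop, hq, hqQ, hnear⟩ := hp
  have hq2 : 0 < q ^ 2 := pow_pos hq 2
  have hres : leastPosResidue a (q ^ 2) ≡ a [MOD q ^ 2] := leastPosResidue_modEq
  refine ⟨leastPosResidue_pos hq2, leastPosResidue_le hq2, hqQ, ?_, ?_⟩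
  · rw [Nat.Coprime, hres.gcd_eq]
    exact Nat.Coprime.coprime_mul_left_right hcop
  · have hg : g ≠ 0 := by rintro rfl; simp at ha
    have hshift := nint_natCast_div_sub_of_modEq hres (g * α)
    push_cast at hshift
    calc _ = nint (g * ((a : ℝ) / (g * q ^ 2) - α)) := by
          rw [hshift]; congr 1; field_simp
      _ ≤ g * nint ((a : ℝ) / (g * q ^ 2) - α) := nint_natCast_mul_le _ _
      _ ≤ g * Δ := by gcongr

lemma ncard_fiber_leastPosResidue_le (b q : ℕ) :
    {p ∈ gSqFracsNear g Q Δ α | (leastPosResidue p.1 (p.2 ^ 2), p.2) = (b, q)}.ncard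
      ≤ ⌊2 * g * Δ⌋₊ + 1 := by
  refine (Set.ncard_le_ncard_of_injOn (fun p => p.1 / q ^ 2) ?_ ?_
    ((Set.finite_Iio g).subset fun n hn => hn.1)).trans
    (ncard_equispaced_nint_le (((b % q ^ 2 : ℕ) : ℝ) / (q ^ 2 : ℕ) - g * α) Δ g)
  · rintro ⟨a, q'⟩ ⟨⟨ha, -, hq, -, hnear⟩, hfib⟩
    simp only [Prod.mk.injEq] at hfib
    obtain ⟨rfl, rfl⟩ := hfib
    have hg : g ≠ 0 := by rintro rfl; simp at ha
    refine ⟨Nat.div_lt_of_lt_mul (by rwa [mul_comm]), ?_⟩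
    rw [show leastPosResidue a (q' ^ 2) % q' ^ 2 = a % q' ^ 2 from leastPosResidue_modEq,
      ← natCast_div_mul_sub_eq a _ g (by positivity) hg]
    push_cast
    exact hnear
  · rintro ⟨a, _⟩ ⟨-, h₁⟩ ⟨a', q'⟩ ⟨-, h₂⟩ hdiv
    simp only [Prod.mk.injEq] at h₁ h₂ hdiv
    obtain ⟨hb, rfl⟩ := h₁
    obtain ⟨hb', rfl⟩ := h₂
    have hmod : a % q' ^ 2 = a' % q' ^ 2 :=
      leastPosResidue_modEq.symm.trans ((hb.trans hb'.symm) ▸ leastPosResidue_modEq)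
    rw [← Nat.div_add_mod a (q' ^ 2), ← Nat.div_add_mod a' (q' ^ 2), hdiv, hmod]

end

lemma ncard_gSqFracsNear_le (g : ℕ) (Q Δ α : ℝ) :
    (gSqFracsNear g Q Δ α).ncard
      ≤ (⌊2 * g * Δ⌋₊ + 1) * (sqFracsNear Q (g * Δ) (g * α)).ncard :=
  Set.ncard_le_mul_ncard_of_mapsTo (fun _ => leastPosResidue_mem_sqFracsNear)
    (sqFracsNear_finite _ _ _) _ fun ⟨b, q⟩ _ => ncard_fiber_leastPosResidue_le b q

/-- Assuming the Baier–Zhao large sieve counting estimate for square moduli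
(for the dilated quantity `gΔ`), the number `M(α)` of fractions `a/(gq²)`
with `gcd(a, gq²) = 1`, `0 ≤ a ≤ gq² − 1`, `1 ≤ q ≤ Q`, lying within `Δ` of `α`
satisfies `M(α) ≪ (1 + gΔ)(Q³gΔ + Q^{1/2})(QΔ⁻¹)^ε`. -/
theorem spacing_count_gq_squared (ε C : ℝ) (hε : 0 < ε) (hC : 0 < C) :
    ∃ C' > 0, ∀ (Q Δ α : ℝ) (g : ℕ), 1 ≤ Q → 0 < Δ → 1 ≤ g →
    (∀ β : ℝ,
      (({p : ℕ × ℕ | 1 ≤ p.1 ∧ p.1 ≤ p.2 ^ 2 ∧ (p.2 : ℝ) ≤ Q ∧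
          Nat.Coprime p.1 (p.2 ^ 2) ∧
          nint ((p.1 : ℝ) / (p.2 : ℝ) ^ 2 - β) ≤ (g : ℝ) * Δ}.ncard : ℝ)
        ≤ C * (Q / ((g : ℝ) * Δ)) ^ ε * (Q ^ 3 * g * Δ + Q ^ ((1 : ℝ) / 2)))) →
    (({p : ℕ × ℕ | p.1 < g * p.2 ^ 2 ∧ Nat.Coprime p.1 (g * p.2 ^ 2) ∧
        1 ≤ p.2 ∧ (p.2 : ℝ) ≤ Q ∧
        nint ((p.1 : ℝ) / ((g : ℝ) * (p.2 : ℝ) ^ 2) - α) ≤ Δ}.ncard : ℝ)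
      ≤ C' * (1 + g * Δ) * (Q ^ 3 * g * Δ + Q ^ ((1 : ℝ) / 2)) * (Q * Δ⁻¹) ^ ε) := by
  refine ⟨2 * C, by positivity, fun Q Δ α g hQ hΔ hg hcount => ?_⟩
  have hfiber : ((⌊2 * g * Δ⌋₊ + 1 : ℕ) : ℝ) ≤ 2 * (1 + g * Δ) := by
    push_cast; linarith [Nat.floor_le (by positivity : 0 ≤ 2 * (g : ℝ) * Δ)]
  have hpow : (Q / (g * Δ)) ^ ε ≤ (Q * Δ⁻¹) ^ ε := by
    have hg' : (1 : ℝ) ≤ g := by exact_mod_cast hg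
    gcongr
    exact (div_le_div_of_nonneg_left (by positivity) hΔ (le_mul_of_one_le_left hΔ.le hg')).trans_eq
      (div_eq_mul_inv Q Δ)
  calc ((gSqFracsNear g Q Δ α).ncard : ℝ)
      ≤ ((⌊2 * g * Δ⌋₊ + 1 : ℕ) : ℝ) * (sqFracsNear Q (g * Δ) (g * α)).ncard := by
        exact_mod_cast ncard_gSqFracsNear_le g Q Δ α
    _ ≤ 2 * (1 + g * Δ) * (C * (Q / (g * Δ)) ^ ε * (Q ^ 3 * g * Δ + Q ^ ((1 : ℝ) / 2))) := by
        gcongr; exact hcount _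
    _ ≤ 2 * (1 + g * Δ) * (C * (Q * Δ⁻¹) ^ ε * (Q ^ 3 * g * Δ + Q ^ ((1 : ℝ) / 2))) := by
        gcongr
    _ = 2 * C * (1 + g * Δ) * (Q ^ 3 * g * Δ + Q ^ ((1 : ℝ) / 2)) * (Q * Δ⁻¹) ^ ε := by ring
end

section
/- Let N ≥ 1, let a₁,…,a_N be complex numbers, and set T(α) = Σ_{n=1}^N a_n e(nα) where e(x) = exp(2πix). Let g ∈ ℕ and Q ≥ 1. Suppose that for every Δ > 0 and every α ∈ ℝ, the number M(α) of pairs (a, q) with 0 ≤ a ≤ gq² − 1, gcd(a, gq²) = 1, 1 ≤ q ≤ Q, ‖a/(gq²) − α‖ ≤ Δ satisfies M(α) ≤ C(1 + gΔ)(Q³gΔ + Q^{1/2})(Q/Δ)^ε. Then Σ_{q ≤ Q} Σ_{a=1, (a,gq²)=1}^{gq²} |T(a/(gq²))|² ≪ (QN)^ε (1 + g/N)(gQ³ + Q^{1/2}N) Σ_{n=1}^N |a_n|². -/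
set_option maxHeartbeats 1000000

open Complex ComplexConjugate

namespace LSaux
open Finset

noncomputable def ee (θ : ℝ) : ℂ := Complex.exp (2 * Real.pi * Complex.I * θ)

lemma ee_add (a b : ℝ) : ee (a + b) = ee a * ee b := by
  rw [ee, ee, ee, ← Complex.exp_add]
  congr 1
  push_cast
  ring

lemma norm_ee (θ : ℝ) : ‖ee θ‖ = 1 := by
  rw [ee,
    show (2 * Real.pi * Complex.I * θ : ℂ) = ((2 * Real.pi * θ : ℝ) : ℂ) * Complex.I by
      push_cast; ring]
  exact Complex.norm_exp_ofReal_mul_I _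

lemma conj_ee (θ : ℝ) : conj (ee θ) = ee (-θ) := by
  rw [ee, ee, ← Complex.exp_conj]
  congr 1
  simp only [map_mul, Complex.conj_I, map_ofNat, Complex.conj_ofReal]
  push_cast
  ring

lemma ee_nat_mul (j : ℕ) (θ : ℝ) : ee (j * θ) = ee θ ^ j := by
  rw [ee, ee, ← Complex.exp_nat_mul]
  congr 1
  push_cast
  ring


lemma nint_nonneg (θ : ℝ) : 0 ≤ nint θ := abs_nonneg _

lemma nint_le_half (θ : ℝ) : nint θ ≤ 1 / 2 := abs_sub_round θ

lemma nint_le_abs_sub_int (θ : ℝ) (m : ℤ) : nint θ ≤ |θ - m| := by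
  by_cases h : m = round θ
  · rw [h]; exact le_refl _
  · have h1 : (1 : ℝ) ≤ |(round θ : ℝ) - m| := by
      have : (1 : ℤ) ≤ |round θ - m| := Int.one_le_abs (sub_ne_zero.mpr (Ne.symm h))
      calc (1:ℝ) = ((1:ℤ):ℝ) := by norm_num
        _ ≤ ((|round θ - m| : ℤ) : ℝ) := by exact_mod_cast this
        _ = |(round θ : ℝ) - m| := by push_cast [Int.cast_abs]; ring_nf
    have h2 := abs_sub_round θ
    have h3 : |(round θ : ℝ) - m| ≤ |θ - round θ| + |θ - m| := by
      have := abs_sub_abs_le_abs_sub ((θ : ℝ) - m) (θ - (round θ : ℝ))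
      calc |(round θ : ℝ) - m| = |(θ - m) - (θ - round θ)| := by ring_nf
        _ ≤ |θ - m| + |θ - round θ| := abs_sub _ _
        _ = |θ - round θ| + |θ - m| := by ring
    have : nint θ ≤ 1/2 := nint_le_half θ
    unfold nint at *
    linarith

lemma nint_neg (θ : ℝ) : nint (-θ) = nint θ := by
  have h1 : nint (-θ) ≤ nint θ := by
    have := nint_le_abs_sub_int (-θ) (-round θ)
    calc nint (-θ) ≤ |(-θ) - ((-round θ : ℤ) : ℝ)| := this
      _ = |θ - round θ| := by push_cast; rw [← abs_neg]; ring_nf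
      _ = nint θ := rfl
  have h2 : nint θ ≤ nint (-θ) := by
    have := nint_le_abs_sub_int θ (-round (-θ))
    calc nint θ ≤ |θ - ((-round (-θ) : ℤ) : ℝ)| := this
      _ = |(-θ) - round (-θ)| := by push_cast; rw [← abs_neg]; ring_nf
      _ = nint (-θ) := rfl
  linarith

lemma nint_add_int (θ : ℝ) (m : ℤ) : nint (θ + m) = nint θ := by
  unfold nint
  rw [round_add_intCast]
  push_cast
  ring_nf


lemma norm_ee_sub_one (θ : ℝ) : ‖ee θ - 1‖ = 2 * |Real.sin (Real.pi * θ)| := by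
  have h : ee θ = Complex.exp (((2 * Real.pi * θ : ℝ) : ℂ) * Complex.I) := by
    rw [ee]; congr 1; push_cast; ring
  rw [h, Complex.exp_mul_I]
  have hsq : ‖(Complex.cos ((2 * Real.pi * θ : ℝ) : ℂ) + Complex.sin ((2 * Real.pi * θ : ℝ) : ℂ) * Complex.I) - 1‖ ^ 2
      = (2 * |Real.sin (Real.pi * θ)|) ^ 2 := by
    rw [Complex.sq_norm]
    have hc : (Complex.cos ((2 * Real.pi * θ : ℝ) : ℂ) + Complex.sin ((2 * Real.pi * θ : ℝ) : ℂ) * Complex.I) - 1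
        = Complex.ofReal (Real.cos (2 * Real.pi * θ) - 1) + Complex.ofReal (Real.sin (2 * Real.pi * θ)) * Complex.I := by
      push_cast [Complex.ofReal_cos, Complex.ofReal_sin]
      ring
    rw [hc, Complex.normSq_add_mul_I]
    have h1 := Real.sin_sq_add_cos_sq (Real.pi * θ)
    have h2 : Real.cos (2 * Real.pi * θ) = 2 * Real.cos (Real.pi * θ) ^ 2 - 1 := by
      rw [show 2 * Real.pi * θ = 2 * (Real.pi * θ) by ring, Real.cos_two_mul]
    have h3 : |Real.sin (Real.pi * θ)| ^ 2 = Real.sin (Real.pi * θ) ^ 2 := sq_abs _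
    have h4 : Real.sin (2 * Real.pi * θ) = 2 * Real.sin (Real.pi * θ) * Real.cos (Real.pi * θ) := by
      rw [show 2 * Real.pi * θ = 2 * (Real.pi * θ) by ring, Real.sin_two_mul]
    linear_combination (Real.cos (2*Real.pi*θ) + 2*Real.cos (Real.pi*θ)^2 - 3) * h2
      + (Real.sin (2*Real.pi*θ) + 2*Real.sin (Real.pi*θ)*Real.cos (Real.pi*θ)) * h4
      + (-4) * h3 + (4*(Real.cos (Real.pi*θ)^2 - 1)) * h1
  have h1 : (0:ℝ) ≤ ‖(Complex.cos ((2 * Real.pi * θ : ℝ) : ℂ) + Complex.sin ((2 * Real.pi * θ : ℝ) : ℂ) * Complex.I) - 1‖ := norm_nonneg _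
  have h2 : (0:ℝ) ≤ 2 * |Real.sin (Real.pi * θ)| := by positivity
  nlinarith [hsq]

lemma sin_ge_nint (θ : ℝ) : 2 * nint θ ≤ |Real.sin (Real.pi * θ)| := by
  set θ' := θ - round θ with hθ'
  have habs : |Real.sin (Real.pi * θ)| = |Real.sin (Real.pi * θ')| := by
    have : Real.pi * θ = Real.pi * θ' + (round θ) * Real.pi := by rw [hθ']; ring
    rw [this, Real.sin_add_int_mul_pi, abs_mul]
    have h5 : |((-1:ℝ)) ^ (round θ)| = 1 := by
      rcases Int.even_or_odd (round θ) with he | ho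
      · rw [he.neg_one_zpow]; simp
      · rw [Odd.neg_one_zpow ho]; simp
    rw [h5, one_mul]
  rw [habs]
  have hb : |θ'| ≤ 1/2 := abs_sub_round θ
  have hj : 2 * |θ'| ≤ Real.sin (Real.pi * |θ'|) := by
    have h1 : (0:ℝ) ≤ Real.pi * |θ'| := by positivity
    have h2 : Real.pi * |θ'| ≤ Real.pi / 2 := by nlinarith [Real.pi_pos]
    have h3 := Real.mul_le_sin h1 h2
    have hpi := Real.pi_pos
    calc 2 * |θ'| = 2 / Real.pi * (Real.pi * |θ'|) := by field_simp
      _ ≤ Real.sin (Real.pi * |θ'|) := h3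
  have heq : Real.sin (Real.pi * |θ'|) ≤ |Real.sin (Real.pi * θ')| := by
    rcases abs_cases θ' with ⟨h, _⟩ | ⟨h, _⟩
    · rw [h]; exact le_abs_self _
    · rw [h, show Real.pi * -θ' = -(Real.pi * θ') by ring, Real.sin_neg]
      exact neg_le_abs _
  have hr : nint θ = |θ'| := rfl
  rw [hr]
  linarith


noncomputable def Dk (L : ℕ) (θ : ℝ) : ℂ := ∑ j ∈ range L, ee (j * θ)

lemma norm_Dk_le (L : ℕ) (θ : ℝ) : ‖Dk L θ‖ ≤ L := by
  calc ‖Dk L θ‖ ≤ ∑ j ∈ range L, ‖ee (j * θ)‖ := norm_sum_le _ _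
    _ = L := by simp only [norm_ee]; simp

lemma ee_ne_one (θ : ℝ) (h : 0 < nint θ) : ee θ ≠ 1 := by
  intro he
  have : ‖ee θ - 1‖ = 0 := by rw [he]; simp
  rw [norm_ee_sub_one] at this
  have := sin_ge_nint θ
  linarith

lemma norm_Dk_le_inv (L : ℕ) (θ : ℝ) (h : 0 < nint θ) : ‖Dk L θ‖ ≤ 1 / (2 * nint θ) := by
  have hne := ee_ne_one θ h
  have hg : Dk L θ = (ee θ ^ L - 1) / (ee θ - 1) := by
    rw [Dk]
    rw [show (∑ j ∈ range L, ee (↑j * θ)) = ∑ j ∈ range L, ee θ ^ j from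
      Finset.sum_congr rfl fun j _ => ee_nat_mul j θ]
    exact geom_sum_eq hne L
  rw [hg, norm_div]
  have h1 : ‖ee θ ^ L - 1‖ ≤ 2 := by
    calc ‖ee θ ^ L - 1‖ ≤ ‖ee θ ^ L‖ + ‖(1:ℂ)‖ := norm_sub_le _ _
      _ = 2 := by rw [norm_pow, norm_ee]; norm_num
  have h2 : 4 * nint θ ≤ ‖ee θ - 1‖ := by
    rw [norm_ee_sub_one]
    have := sin_ge_nint θ
    linarith
  have h3 : 0 < ‖ee θ - 1‖ := by linarith [nint_nonneg θ]
  rw [div_le_div_iff₀ h3 (by linarith)]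
  nlinarith


lemma quad {ι : Type*} (F : Finset ι) (d : ι → ℂ) (x : ι → ℝ) (L : ℕ) :
    ∑ j ∈ range L, ∑ k ∈ range L,
      ‖∑ r ∈ F, d r * (ee (j * x r) * conj (ee (k * x r)))‖ ^ 2
    ≤ ∑ r ∈ F, ‖d r‖ ^ 2 * ∑ s ∈ F, ‖Dk L (x r - x s)‖ ^ 2 := by
  set v : ℕ → ι → ℂ := fun j r => ee (j * x r) with hv
  set A : ℕ → ℕ → ℂ := fun j k => ∑ r ∈ F, d r * (v j r * conj (v k r)) with hA
  set B : ι → ι → ℂ := fun r s => ∑ j ∈ range L, v j r * conj (v j s) with hB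
  have hconjB : ∀ r s, conj (B r s) = ∑ k ∈ range L, conj (v k r) * v k s := by
    intro r s
    rw [hB, map_sum]
    exact Finset.sum_congr rfl fun k _ => by rw [map_mul, conj_conj]
  have expand : ∀ j k, A j k * conj (A j k)
      = ∑ r ∈ F, ∑ s ∈ F, (d r * conj (d s)) *
          ((v j r * conj (v j s)) * (conj (v k r) * v k s)) := by
    intro j k
    rw [hA]
    simp only [map_sum, map_mul, conj_conj]
    rw [Finset.sum_mul_sum]
    exact Finset.sum_congr rfl fun r _ => Finset.sum_congr rfl fun s _ => by ring
  have hfact : ∀ r ∈ F, ∀ s ∈ F,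
      ∑ j ∈ range L, ∑ k ∈ range L, (d r * conj (d s)) *
          ((v j r * conj (v j s)) * (conj (v k r) * v k s))
      = (d r * conj (d s)) * (B r s * conj (B r s)) := by
    intro r _ s _
    rw [hconjB, hB, Finset.sum_mul_sum]
    simp only [Finset.mul_sum]
  have hident : ∑ j ∈ range L, ∑ k ∈ range L, A j k * conj (A j k)
      = ∑ r ∈ F, ∑ s ∈ F, (d r * conj (d s)) * (B r s * conj (B r s)) := by
    calc ∑ j ∈ range L, ∑ k ∈ range L, A j k * conj (A j k)
        = ∑ j ∈ range L, ∑ k ∈ range L, ∑ r ∈ F, ∑ s ∈ F, (d r * conj (d s)) *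
            ((v j r * conj (v j s)) * (conj (v k r) * v k s)) := by
          exact Finset.sum_congr rfl fun j _ => Finset.sum_congr rfl fun k _ => expand j k
      _ = ∑ j ∈ range L, ∑ r ∈ F, ∑ k ∈ range L, ∑ s ∈ F, _ := by
          exact Finset.sum_congr rfl fun j _ => Finset.sum_comm
      _ = ∑ r ∈ F, ∑ j ∈ range L, ∑ k ∈ range L, ∑ s ∈ F, _ := Finset.sum_comm
      _ = ∑ r ∈ F, ∑ j ∈ range L, ∑ s ∈ F, ∑ k ∈ range L, _ := by
          exact Finset.sum_congr rfl fun r _ => Finset.sum_congr rfl fun j _ => Finset.sum_comm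
      _ = ∑ r ∈ F, ∑ s ∈ F, ∑ j ∈ range L, ∑ k ∈ range L, _ := by
          exact Finset.sum_congr rfl fun r _ => Finset.sum_comm
      _ = ∑ r ∈ F, ∑ s ∈ F, (d r * conj (d s)) * (B r s * conj (B r s)) := by
          exact Finset.sum_congr rfl fun r hr => Finset.sum_congr rfl fun s hs => hfact r hr s hs
  -- real parts
  have hre : ∑ j ∈ range L, ∑ k ∈ range L, ‖A j k‖ ^ 2
      = (∑ j ∈ range L, ∑ k ∈ range L, A j k * conj (A j k)).re := by
    rw [Complex.re_sum]
    refine Finset.sum_congr rfl fun j _ => ?_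
    rw [Complex.re_sum]
    refine Finset.sum_congr rfl fun k _ => ?_
    rw [Complex.mul_conj]
    rw [Complex.ofReal_re, Complex.normSq_eq_norm_sq]
  have hBsymm : ∀ r s, ‖B s r‖ = ‖B r s‖ := by
    intro r s
    have : B s r = conj (B r s) := by
      rw [hconjB, hB]
      exact Finset.sum_congr rfl fun j _ => by rw [mul_comm]
    rw [this, RCLike.norm_conj]
  have step1 : ∑ j ∈ range L, ∑ k ∈ range L, ‖A j k‖ ^ 2
      ≤ ∑ r ∈ F, ∑ s ∈ F, ‖d r‖ * ‖d s‖ * ‖B r s‖ ^ 2 := by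
    rw [hre, hident, Complex.re_sum]
    calc ∑ r ∈ F, (∑ s ∈ F, (d r * conj (d s)) * (B r s * conj (B r s))).re
        ≤ ∑ r ∈ F, ∑ s ∈ F, ‖(d r * conj (d s)) * (B r s * conj (B r s))‖ := by
          refine Finset.sum_le_sum fun r _ => ?_
          rw [Complex.re_sum]
          exact Finset.sum_le_sum fun s _ => Complex.re_le_norm _
      _ = ∑ r ∈ F, ∑ s ∈ F, ‖d r‖ * ‖d s‖ * ‖B r s‖ ^ 2 := by
          refine Finset.sum_congr rfl fun r _ => Finset.sum_congr rfl fun s _ => ?_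
          rw [Complex.mul_conj]
          rw [norm_mul, norm_mul, RCLike.norm_conj, Complex.norm_real, Complex.normSq_eq_norm_sq,
            Real.norm_of_nonneg (sq_nonneg _)]
  have step2 : ∑ r ∈ F, ∑ s ∈ F, ‖d r‖ * ‖d s‖ * ‖B r s‖ ^ 2
      ≤ ∑ r ∈ F, ∑ s ∈ F, ‖d r‖ ^ 2 * ‖B r s‖ ^ 2 := by
    have h1 : ∑ r ∈ F, ∑ s ∈ F, ‖d r‖ * ‖d s‖ * ‖B r s‖ ^ 2
        ≤ ∑ r ∈ F, ∑ s ∈ F, (‖d r‖ ^ 2 + ‖d s‖ ^ 2) / 2 * ‖B r s‖ ^ 2 := by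
      refine Finset.sum_le_sum fun r _ => Finset.sum_le_sum fun s _ => ?_
      have : ‖d r‖ * ‖d s‖ ≤ (‖d r‖ ^ 2 + ‖d s‖ ^ 2) / 2 := by nlinarith [sq_nonneg (‖d r‖ - ‖d s‖)]
      exact mul_le_mul_of_nonneg_right this (by positivity)
    have h2 : ∑ r ∈ F, ∑ s ∈ F, (‖d r‖ ^ 2 + ‖d s‖ ^ 2) / 2 * ‖B r s‖ ^ 2
        = ∑ r ∈ F, ∑ s ∈ F, ‖d r‖ ^ 2 * ‖B r s‖ ^ 2 := by
      have hsplit : ∑ r ∈ F, ∑ s ∈ F, (‖d r‖ ^ 2 + ‖d s‖ ^ 2) / 2 * ‖B r s‖ ^ 2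
          = (∑ r ∈ F, ∑ s ∈ F, ‖d r‖ ^ 2 * ‖B r s‖ ^ 2) / 2
            + (∑ r ∈ F, ∑ s ∈ F, ‖d s‖ ^ 2 * ‖B r s‖ ^ 2) / 2 := by
        rw [Finset.sum_div, Finset.sum_div, ← Finset.sum_add_distrib]
        refine Finset.sum_congr rfl fun r _ => ?_
        rw [Finset.sum_div, Finset.sum_div, ← Finset.sum_add_distrib]
        exact Finset.sum_congr rfl fun s _ => by ring
      have hswap : ∑ r ∈ F, ∑ s ∈ F, ‖d s‖ ^ 2 * ‖B r s‖ ^ 2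
          = ∑ r ∈ F, ∑ s ∈ F, ‖d r‖ ^ 2 * ‖B r s‖ ^ 2 := by
        rw [Finset.sum_comm]
        exact Finset.sum_congr rfl fun s _ => Finset.sum_congr rfl fun r _ => by rw [hBsymm]
      rw [hsplit, hswap]
      ring
    linarith
  have hBD : ∀ r s, B r s = Dk L (x r - x s) := by
    intro r s
    rw [hB, Dk]
    refine Finset.sum_congr rfl fun j _ => ?_
    rw [conj_ee, ← ee_add]
    congr 1
    ring
  calc ∑ j ∈ range L, ∑ k ∈ range L, ‖∑ r ∈ F, d r * (ee (j * x r) * conj (ee (k * x r)))‖ ^ 2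
      = ∑ j ∈ range L, ∑ k ∈ range L, ‖A j k‖ ^ 2 := rfl
    _ ≤ ∑ r ∈ F, ∑ s ∈ F, ‖d r‖ ^ 2 * ‖B r s‖ ^ 2 := le_trans step1 step2
    _ = ∑ r ∈ F, ‖d r‖ ^ 2 * ∑ s ∈ F, ‖Dk L (x r - x s)‖ ^ 2 := by
        refine Finset.sum_congr rfl fun r _ => ?_
        rw [Finset.mul_sum]
        exact Finset.sum_congr rfl fun s _ => by rw [hBD]


noncomputable def fjk {ι : Type*} (F : Finset ι) (c : ι → ℂ) (x : ι → ℝ) (N : ℕ)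
    (p : ℕ × ℕ) : ℝ :=
  ‖∑ r ∈ F, (c r * ee (N * x r)) * (ee (p.1 * x r) * conj (ee (p.2 * x r)))‖ ^ 2

def emap (N : ℕ) (p : ℕ × ℕ) : ℕ × ℕ := (p.2, p.2 + N - p.1)

lemma embed {ι : Type*} (F : Finset ι) (c : ι → ℂ) (x : ι → ℝ) (N : ℕ) (hN : 1 ≤ N) :
    (N : ℝ) * ∑ n ∈ Icc 1 N, ‖∑ r ∈ F, c r * ee (n * x r)‖ ^ 2
    ≤ ∑ p ∈ (range (2 * N)) ×ˢ (range (2 * N)), fjk F c x N p := by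
  classical
  have hval : ∀ p ∈ (Icc 1 N) ×ˢ (range N),
      fjk F c x N (emap N p) = ‖∑ r ∈ F, c r * ee (p.1 * x r)‖ ^ 2 := by
    rintro ⟨n, t⟩ hp
    rw [Finset.mem_product, Finset.mem_Icc, Finset.mem_range] at hp
    obtain ⟨⟨hn1, hn2⟩, ht⟩ := hp
    rw [fjk, emap]
    congr 2
    refine Finset.sum_congr rfl fun r _ => ?_
    rw [conj_ee, ← ee_add, mul_assoc, ← ee_add]
    congr 2
    have hc : ((t + N - n : ℕ) : ℝ) = (t : ℝ) + N - n := by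
      have h : n ≤ t + N := by omega
      push_cast [Nat.cast_sub h]
      ring
    rw [hc]
    ring
  have hinj : ∀ p ∈ (Icc 1 N) ×ˢ (range N), ∀ q ∈ (Icc 1 N) ×ˢ (range N),
      emap N p = emap N q → p = q := by
    rintro ⟨n, t⟩ hp ⟨n', t'⟩ hq h
    rw [Finset.mem_product, Finset.mem_Icc, Finset.mem_range] at hp hq
    rw [emap, emap, Prod.mk.injEq] at h
    obtain ⟨h1, h2⟩ := h
    subst h1
    have : n = n' := by omega
    simp [this]
  have himg : ((Icc 1 N) ×ˢ (range N)).image (emap N) ⊆ (range (2 * N)) ×ˢ (range (2 * N)) := by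
    intro q hq
    rw [Finset.mem_image] at hq
    obtain ⟨⟨n, t⟩, hp, rfl⟩ := hq
    rw [Finset.mem_product, Finset.mem_Icc, Finset.mem_range] at hp
    rw [emap, Finset.mem_product, Finset.mem_range, Finset.mem_range]
    constructor <;> omega
  have h1 : (N : ℝ) * ∑ n ∈ Icc 1 N, ‖∑ r ∈ F, c r * ee (n * x r)‖ ^ 2
      = ∑ p ∈ (Icc 1 N) ×ˢ (range N), fjk F c x N (emap N p) := by
    rw [Finset.sum_congr rfl hval, Finset.sum_product]
    rw [Finset.mul_sum]
    refine Finset.sum_congr rfl fun n _ => ?_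
    simp only []
    rw [Finset.sum_const, Finset.card_range, nsmul_eq_mul]
  have h2 := (Finset.sum_image (f := fjk F c x N) hinj).symm
  rw [h1, h2]
  exact Finset.sum_le_sum_of_subset_of_nonneg himg fun q _ _ => by rw [fjk]; positivity

lemma abstract_ls {ι : Type*} (F : Finset ι) (x : ι → ℝ) (N : ℕ) (hN : 1 ≤ N)
    (a : ℕ → ℂ) (Λ : ℝ) (hΛ0 : 0 ≤ Λ)
    (hΛ : ∀ r ∈ F, ∑ s ∈ F, ‖Dk (2 * N) (x r - x s)‖ ^ 2 ≤ (N : ℝ) * Λ) :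
    ∑ r ∈ F, ‖∑ n ∈ Icc 1 N, a n * ee (n * x r)‖ ^ 2
      ≤ Λ * ∑ n ∈ Icc 1 N, ‖a n‖ ^ 2 := by
  classical
  set T : ι → ℂ := fun r => ∑ n ∈ Icc 1 N, a n * ee (n * x r) with hT
  set c : ι → ℂ := fun r => conj (T r) with hc
  set S : ℝ := ∑ r ∈ F, ‖T r‖ ^ 2 with hS
  set G : ℕ → ℂ := fun n => ∑ r ∈ F, c r * ee (n * x r) with hG
  have hS0 : 0 ≤ S := Finset.sum_nonneg fun r _ => by positivity
  have hnormc : ∀ r, ‖c r‖ = ‖T r‖ := fun r => RCLike.norm_conj _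
  -- step 1 : S^2 ≤ (∑ ‖a n‖^2) * (∑ ‖G n‖^2)
  have h1 : (S : ℂ) = ∑ n ∈ Icc 1 N, a n * G n := by
    rw [hG]
    simp only [Finset.mul_sum]
    rw [Finset.sum_comm]
    have : ∀ r ∈ F, ∑ n ∈ Icc 1 N, a n * (c r * ee (n * x r)) = (↑(‖T r‖ ^ 2) : ℂ) := by
      intro r _
      have : ∑ n ∈ Icc 1 N, a n * (c r * ee (n * x r)) = T r * c r := by
        rw [hT, Finset.sum_mul]
        exact Finset.sum_congr rfl fun n _ => by ring
      rw [this, hc, Complex.mul_conj, Complex.normSq_eq_norm_sq]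
    rw [Finset.sum_congr rfl this, hS]
    push_cast
    ring
  have h2 : S ≤ ∑ n ∈ Icc 1 N, ‖a n‖ * ‖G n‖ := by
    calc S = ‖(S : ℂ)‖ := by rw [Complex.norm_real, Real.norm_of_nonneg hS0]
      _ = ‖∑ n ∈ Icc 1 N, a n * G n‖ := by rw [h1]
      _ ≤ ∑ n ∈ Icc 1 N, ‖a n * G n‖ := norm_sum_le _ _
      _ = ∑ n ∈ Icc 1 N, ‖a n‖ * ‖G n‖ := Finset.sum_congr rfl fun n _ => norm_mul _ _
  have h3 : S ^ 2 ≤ (∑ n ∈ Icc 1 N, ‖a n‖ ^ 2) * (∑ n ∈ Icc 1 N, ‖G n‖ ^ 2) := by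
    calc S ^ 2 ≤ (∑ n ∈ Icc 1 N, ‖a n‖ * ‖G n‖) ^ 2 := by
          apply pow_le_pow_left₀ hS0 h2
      _ ≤ _ := Finset.sum_mul_sq_le_sq_mul_sq _ _ _
  -- step 2 : ∑ ‖G n‖^2 ≤ Λ * S
  have h4 : (N : ℝ) * ∑ n ∈ Icc 1 N, ‖G n‖ ^ 2 ≤ (N : ℝ) * (Λ * S) := by
    calc (N : ℝ) * ∑ n ∈ Icc 1 N, ‖G n‖ ^ 2
        ≤ ∑ p ∈ (range (2 * N)) ×ˢ (range (2 * N)), fjk F c x N p := embed F c x N hN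
      _ = ∑ j ∈ range (2 * N), ∑ k ∈ range (2 * N),
            ‖∑ r ∈ F, (c r * ee (N * x r)) * (ee (j * x r) * conj (ee (k * x r)))‖ ^ 2 := by
          rw [Finset.sum_product]
          exact Finset.sum_congr rfl fun j _ => Finset.sum_congr rfl fun k _ => by rw [fjk]
      _ ≤ ∑ r ∈ F, ‖c r * ee (N * x r)‖ ^ 2 * ∑ s ∈ F, ‖Dk (2 * N) (x r - x s)‖ ^ 2 :=
          quad F _ x (2 * N)
      _ ≤ ∑ r ∈ F, ‖c r * ee (N * x r)‖ ^ 2 * ((N : ℝ) * Λ) := by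
          refine Finset.sum_le_sum fun r hr => ?_
          exact mul_le_mul_of_nonneg_left (hΛ r hr) (by positivity)
      _ = (N : ℝ) * (Λ * S) := by
          rw [hS, ← Finset.sum_mul]
          rw [Finset.sum_congr rfl fun r (_ : r ∈ F) => by
            rw [norm_mul, norm_ee, mul_one, hnormc r]]
          ring
  have hNpos : (0:ℝ) < N := by exact_mod_cast hN
  have h5 : ∑ n ∈ Icc 1 N, ‖G n‖ ^ 2 ≤ Λ * S := le_of_mul_le_mul_left h4 hNpos
  -- combine
  have h6 : S ^ 2 ≤ (∑ n ∈ Icc 1 N, ‖a n‖ ^ 2) * (Λ * S) := by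
    refine le_trans h3 ?_
    refine mul_le_mul_of_nonneg_left h5 (Finset.sum_nonneg fun n _ => by positivity)
  rcases eq_or_lt_of_le hS0 with h | h
  · rw [← h]
    positivity
  · have := (mul_le_mul_iff_left₀ h).mp (by nlinarith : S * S ≤ ((∑ n ∈ Icc 1 N, ‖a n‖ ^ 2) * Λ) * S)
    calc ∑ r ∈ F, ‖T r‖ ^ 2 = S := rfl
      _ ≤ (∑ n ∈ Icc 1 N, ‖a n‖ ^ 2) * Λ := this
      _ = Λ * ∑ n ∈ Icc 1 N, ‖a n‖ ^ 2 := mul_comm _ _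

lemma kernel_decomp (N : ℕ) (hN : 1 ≤ N) (θ : ℝ) :
    ‖Dk (2 * N) θ‖ ^ 2 ≤ (if nint θ ≤ 1 / N then 4 * (N:ℝ) ^ 2 else 0)
      + ∑ k ∈ Icc 1 N, (if nint θ ≤ 2 ^ k / N then ((N:ℝ) / 2 ^ k) ^ 2 else 0) := by
  classical
  have hNpos : (0:ℝ) < N := by exact_mod_cast hN
  have hsum_nonneg : (0:ℝ) ≤ ∑ k ∈ Icc 1 N, (if nint θ ≤ 2 ^ k / N then ((N:ℝ) / 2 ^ k) ^ 2 else 0) :=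
    Finset.sum_nonneg fun k _ => by positivity
  by_cases h : nint θ ≤ 1 / N
  · rw [if_pos h]
    have h1 : ‖Dk (2 * N) θ‖ ≤ 2 * N := by
      have := norm_Dk_le (2 * N) θ
      push_cast at this
      linarith
    have h2 : ‖Dk (2 * N) θ‖ ^ 2 ≤ (2 * (N:ℝ)) ^ 2 := by
      apply pow_le_pow_left₀ (norm_nonneg _) h1
    nlinarith
  · rw [if_neg h]
    push_neg at h
    have hpos : 0 < nint θ := lt_trans (by positivity) h
    -- minimal k with nint θ ≤ 2^k / N
    have hex : ∃ k : ℕ, nint θ ≤ 2 ^ k / N := by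
      refine ⟨N, ?_⟩
      have h2N : (N:ℝ) < 2 ^ N := by exact_mod_cast Nat.lt_two_pow_self (n := N)
      have : (1:ℝ) ≤ 2 ^ N / N := by
        rw [le_div_iff₀ hNpos]; linarith
      linarith [nint_le_half θ]
    set k₀ := Nat.find hex with hk₀
    have hP : nint θ ≤ 2 ^ k₀ / N := Nat.find_spec hex
    have hk₀pos : 1 ≤ k₀ := by
      rcases Nat.eq_zero_or_pos k₀ with h0 | h1
      · exfalso
        have := hP
        rw [h0] at this
        simp at this
        rw [one_div] at h
        linarith
      · exact h1
    have hk₀le : k₀ ≤ N := by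
      by_contra hgt
      push_neg at hgt
      have hmin := Nat.find_min hex (show N < k₀ from hgt)
      have h2N : (N:ℝ) < 2 ^ N := by exact_mod_cast Nat.lt_two_pow_self (n := N)
      have : (1:ℝ) ≤ 2 ^ N / N := by rw [le_div_iff₀ hNpos]; linarith
      exact hmin (by linarith [nint_le_half θ])
    have hmin : 2 ^ (k₀ - 1) / N < nint θ := by
      have := Nat.find_min hex (show k₀ - 1 < k₀ from by omega)
      push_neg at this
      exact this
    have hbound : ‖Dk (2 * N) θ‖ ^ 2 ≤ ((N:ℝ) / 2 ^ k₀) ^ 2 := by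
      have h1 := norm_Dk_le_inv (2 * N) θ hpos
      have h2 : 1 / (2 * nint θ) ≤ (N:ℝ) / 2 ^ k₀ := by
        rw [div_le_div_iff₀ (by positivity) (by positivity)]
        have hpow : (2:ℝ) ^ k₀ = 2 * 2 ^ (k₀ - 1) := by
          rw [← pow_succ']
          congr 1
          omega
        rw [hpow]
        have := (div_lt_iff₀ hNpos).mp hmin
        nlinarith
      calc ‖Dk (2 * N) θ‖ ^ 2 ≤ (1 / (2 * nint θ)) ^ 2 := by
            apply pow_le_pow_left₀ (norm_nonneg _) h1
        _ ≤ ((N:ℝ) / 2 ^ k₀) ^ 2 := by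
            apply pow_le_pow_left₀ (by positivity) h2
    have hterm : ((N:ℝ) / 2 ^ k₀) ^ 2
        ≤ ∑ k ∈ Icc 1 N, (if nint θ ≤ 2 ^ k / N then ((N:ℝ) / 2 ^ k) ^ 2 else 0) := by
      have hmem : k₀ ∈ Icc 1 N := Finset.mem_Icc.mpr ⟨hk₀pos, hk₀le⟩
      have := Finset.single_le_sum (f := fun k => if nint θ ≤ 2 ^ k / N then ((N:ℝ) / 2 ^ k) ^ 2 else 0)
        (fun k _ => by positivity) hmem
      rw [if_pos hP] at this
      exact this
    linarith

lemma coprime_mod {b m : ℕ} (h : Nat.Coprime b m) : Nat.Coprime (b % m) m := by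
  unfold Nat.Coprime at *
  have h1 : Nat.gcd m b = Nat.gcd (b % m) m := Nat.gcd_rec m b
  rw [← h1, Nat.gcd_comm]
  exact h

lemma mod_inj {b b' m : ℕ} (hb1 : 1 ≤ b) (hb2 : b ≤ m) (hb1' : 1 ≤ b') (hb2' : b' ≤ m)
    (h : b % m = b' % m) : b = b' := by
  rcases eq_or_lt_of_le hb2 with rfl | hlt
  · rcases eq_or_lt_of_le hb2' with rfl | hlt'
    · rfl
    · rw [Nat.mod_self, Nat.mod_eq_of_lt hlt'] at h; omega
  · rcases eq_or_lt_of_le hb2' with rfl | hlt'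
    · rw [Nat.mod_eq_of_lt hlt, Nat.mod_self] at h; omega
    · rwa [Nat.mod_eq_of_lt hlt, Nat.mod_eq_of_lt hlt'] at h

lemma core_alg {Nr u gr Q3 s : ℝ} (hN : 1 ≤ Nr) (hu : 1 ≤ u) (hg : 0 ≤ gr)
    (hQ3 : 0 ≤ Q3) (hs : 0 ≤ s) :
    (Nr / u) ^ 2 * ((1 + gr * (u / Nr)) * (Q3 * gr * (u / Nr) + s))
      ≤ Nr * ((1 + gr / Nr) * (gr * Q3 + s * Nr)) := by
  have hN0 : (0:ℝ) < Nr := by linarith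
  have hu0 : (0:ℝ) < u := by linarith
  have e1 : (Nr / u) ^ 2 * ((1 + gr * (u / Nr)) * (Q3 * gr * (u / Nr) + s))
      = Nr * gr * Q3 / u + s * Nr ^ 2 / u ^ 2 + gr ^ 2 * Q3 + gr * s * Nr / u := by
    field_simp
    ring
  have e2 : Nr * ((1 + gr / Nr) * (gr * Q3 + s * Nr))
      = Nr * gr * Q3 + s * Nr ^ 2 + gr ^ 2 * Q3 + gr * s * Nr := by
    field_simp
    ring
  rw [e1, e2]
  have hu2 : (1:ℝ) ≤ u ^ 2 := by nlinarith
  have d1 : Nr * gr * Q3 / u ≤ Nr * gr * Q3 := div_le_self (by positivity) hu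
  have d2 : s * Nr ^ 2 / u ^ 2 ≤ s * Nr ^ 2 := div_le_self (by positivity) hu2
  have d3 : gr * s * Nr / u ≤ gr * s * Nr := div_le_self (by positivity) hu
  linarith

lemma geomle (t : ℝ) (h0 : 0 ≤ t) (h1 : t < 1) (N : ℕ) :
    ∑ i ∈ range N, t ^ i ≤ 1 / (1 - t) := by
  have hne : t ≠ 1 := ne_of_lt h1
  rw [geom_sum_eq hne]
  rw [show (t ^ N - 1) / (t - 1) = (1 - t ^ N) / (1 - t) by
    rw [div_eq_div_iff] <;> [ring; linarith; linarith]]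
  gcongr
  · nlinarith [pow_nonneg h0 N]

lemma rpow_pow (x : ℝ) (hx : 0 ≤ x) (k : ℕ) (ε : ℝ) : ((x:ℝ) ^ k) ^ ε = (x ^ ε) ^ k := by
  rw [← Real.rpow_natCast x k, ← Real.rpow_mul hx, mul_comm, Real.rpow_mul hx,
    Real.rpow_natCast]

end LSaux

open LSaux Finset

open scoped Classical in
/-- The large sieve for moduli `gq²`: assuming the counting bound for well-spaced
fractions `a/(gq²)`, one has
`∑_{q ≤ Q} ∑_{a=1, (a,gq²)=1}^{gq²} |T(a/(gq²))|² ≪ (QN)^ε (1 + g/N)(gQ³ + Q^{1/2}N) ‖a‖₂²`. -/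
theorem large_sieve_gq_squared (ε C : ℝ) (hε : 0 < ε) (hC : 0 < C) :
    ∃ C' > 0, ∀ (N : ℕ), 1 ≤ N → ∀ (a : ℕ → ℂ) (g : ℕ), 1 ≤ g → ∀ Q : ℝ, 1 ≤ Q →
    (∀ Δ : ℝ, 0 < Δ → ∀ α : ℝ,
      (({p : ℕ × ℕ | p.1 < g * p.2 ^ 2 ∧ Nat.Coprime p.1 (g * p.2 ^ 2) ∧
          1 ≤ p.2 ∧ (p.2 : ℝ) ≤ Q ∧
          nint ((p.1 : ℝ) / ((g : ℝ) * (p.2 : ℝ) ^ 2) - α) ≤ Δ}.ncard : ℝ)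
        ≤ C * (1 + g * Δ) * (Q ^ 3 * g * Δ + Q ^ ((1 : ℝ) / 2)) * (Q / Δ) ^ ε)) →
    ∑ q ∈ Finset.Icc 1 ⌊Q⌋₊,
      ∑ b ∈ (Finset.Icc 1 (g * q ^ 2)).filter (fun b => Nat.Coprime b (g * q ^ 2)),
        ‖∑ n ∈ Finset.Icc 1 N, a n * Complex.exp (2 * Real.pi * I * n * b / (g * q ^ 2))‖ ^ 2
      ≤ C' * ((Q * N) ^ ε) * (1 + (g : ℝ) / N) * (g * Q ^ 3 + Q ^ ((1 : ℝ) / 2) * N) *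
          ∑ n ∈ Finset.Icc 1 N, ‖a n‖ ^ 2 := by
  have h2e : (1:ℝ) < 2 ^ ε := by
    rw [show (1:ℝ) = (2:ℝ) ^ (0:ℝ) by simp]
    exact Real.rpow_lt_rpow_left_iff (by norm_num) |>.mpr hε
  have h2e0 : (0:ℝ) < 2 ^ ε - 1 := by linarith
  set cε : ℝ := 4 + 1 / (2 ^ ε - 1) with hcε
  have hcε_pos : 0 < cε := by positivity
  refine ⟨C * cε, by positivity, ?_⟩
  intro N hN a g hg Q hQ hcount
  have hNpos : (0:ℝ) < N := by exact_mod_cast hN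
  have hgpos : (0:ℝ) < g := by exact_mod_cast hg
  have hQ0 : (0:ℝ) < Q := by linarith
  have hsqQ : (0:ℝ) ≤ Q ^ ((1:ℝ)/2) := Real.rpow_nonneg (le_of_lt hQ0) _
  have hQN : (0:ℝ) ≤ (Q * N) ^ ε := Real.rpow_nonneg (by positivity) _
  -- the index set
  set F : Finset (Σ _ : ℕ, ℕ) := (Finset.Icc 1 ⌊Q⌋₊).sigma
    (fun q => (Finset.Icc 1 (g * q ^ 2)).filter (fun b => Nat.Coprime b (g * q ^ 2))) with hF
  set x : (Σ _ : ℕ, ℕ) → ℝ := fun r => (r.2 : ℝ) / ((g : ℝ) * (r.1 : ℝ) ^ 2) with hx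
  -- rewrite the LHS
  have hLHS : ∑ q ∈ Finset.Icc 1 ⌊Q⌋₊,
      ∑ b ∈ (Finset.Icc 1 (g * q ^ 2)).filter (fun b => Nat.Coprime b (g * q ^ 2)),
        ‖∑ n ∈ Finset.Icc 1 N, a n * Complex.exp (2 * Real.pi * I * n * b / (g * q ^ 2))‖ ^ 2
      = ∑ r ∈ F, ‖∑ n ∈ Finset.Icc 1 N, a n * ee (n * x r)‖ ^ 2 := by
    rw [hF, Finset.sum_sigma]
    refine Finset.sum_congr rfl fun q _ => Finset.sum_congr rfl fun b _ => ?_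
    congr 2
    refine Finset.sum_congr rfl fun n _ => ?_
    congr 1
    rw [ee]
    congr 1
    rw [hx]
    push_cast
    ring
  rw [hLHS]
  -- counting bound
  have hcard : ∀ (α : ℝ) (δ : ℝ), 0 < δ →
      ((F.filter (fun s => nint (x s - α) ≤ δ)).card : ℝ)
        ≤ C * (1 + g * δ) * (Q ^ 3 * g * δ + Q ^ ((1:ℝ)/2)) * (Q / δ) ^ ε := by
    intro α δ hδ
    set S : Set (ℕ × ℕ) := {p : ℕ × ℕ | p.1 < g * p.2 ^ 2 ∧ Nat.Coprime p.1 (g * p.2 ^ 2) ∧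
          1 ≤ p.2 ∧ (p.2 : ℝ) ≤ Q ∧
          nint ((p.1 : ℝ) / ((g : ℝ) * (p.2 : ℝ) ^ 2) - α) ≤ δ} with hS
    have hSfin : S.Finite := by
      apply Set.Finite.subset (Finset.finite_toSet ((range (g * ⌊Q⌋₊ ^ 2 + 1)) ×ˢ (Finset.Icc 1 ⌊Q⌋₊)))
      intro p hp
      rw [hS] at hp
      obtain ⟨h1, _, h3, h4, _⟩ := hp
      have hq : p.2 ≤ ⌊Q⌋₊ := Nat.le_floor h4
      simp only [Finset.coe_product, Set.mem_prod, Finset.mem_coe, Finset.mem_range,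
        Finset.mem_Icc]
      constructor
      · have : g * p.2 ^ 2 ≤ g * ⌊Q⌋₊ ^ 2 :=
          Nat.mul_le_mul_left g (Nat.pow_le_pow_left hq 2)
        omega
      · exact ⟨h3, hq⟩
    -- membership facts for elements of F
    have hmemF : ∀ s : (Σ _ : ℕ, ℕ), s ∈ F →
        1 ≤ s.1 ∧ s.1 ≤ ⌊Q⌋₊ ∧ 1 ≤ s.2 ∧ s.2 ≤ g * s.1 ^ 2 ∧ Nat.Coprime s.2 (g * s.1 ^ 2) := by
      intro s hs
      rw [hF, Finset.mem_sigma] at hs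
      obtain ⟨h1, h2⟩ := hs
      rw [Finset.mem_filter, Finset.mem_Icc] at h2
      rw [Finset.mem_Icc] at h1
      exact ⟨h1.1, h1.2, h2.1.1, h2.1.2, h2.2⟩
    set φ : (Σ _ : ℕ, ℕ) → ℕ × ℕ := fun s => (s.2 % (g * s.1 ^ 2), s.1) with hφ
    have hm : ∀ s : (Σ _ : ℕ, ℕ), s ∈ F → 0 < g * s.1 ^ 2 := by
      intro s hs
      obtain ⟨h1, _, _, _, _⟩ := hmemF s hs
      positivity
    have hinj : ∀ p ∈ F.filter (fun s => nint (x s - α) ≤ δ),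
        ∀ q ∈ F.filter (fun s => nint (x s - α) ≤ δ), φ p = φ q → p = q := by
      intro p hp q hq h
      rw [Finset.mem_filter] at hp hq
      obtain ⟨hp1, _, hp3, hp4, _⟩ := hmemF p hp.1
      obtain ⟨hq1, _, hq3, hq4, _⟩ := hmemF q hq.1
      rw [hφ, Prod.mk.injEq] at h
      obtain ⟨h1, h2⟩ := h
      rcases p with ⟨pq, pb⟩
      rcases q with ⟨qq, qb⟩
      simp only at h1 h2 hp3 hp4 hq3 hq4
      subst h2
      have : pb = qb := mod_inj hp3 hp4 hq3 hq4 h1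
      subst this
      rfl
    have hsub : ∀ p ∈ (F.filter (fun s => nint (x s - α) ≤ δ)).image φ, p ∈ S := by
      intro p hp
      rw [Finset.mem_image] at hp
      obtain ⟨s, hs, rfl⟩ := hp
      rw [Finset.mem_filter] at hs
      obtain ⟨hsF, hsnint⟩ := hs
      obtain ⟨h1, h2, h3, h4, h5⟩ := hmemF s hsF
      have hmpos : 0 < g * s.1 ^ 2 := hm s hsF
      rw [hS, hφ]
      refine ⟨Nat.mod_lt _ hmpos, coprime_mod h5, h1, ?_, ?_⟩
      · calc ((s.1 : ℝ)) ≤ (⌊Q⌋₊ : ℝ) := by exact_mod_cast h2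
          _ ≤ Q := Nat.floor_le (le_of_lt hQ0)
      · -- nint value is the same
        have hmR : ((g * s.1 ^ 2 : ℕ) : ℝ) = (g : ℝ) * (s.1 : ℝ) ^ 2 := by push_cast; ring
        have hmR0 : ((g : ℝ) * (s.1 : ℝ) ^ 2) ≠ 0 := by
          have : (0:ℝ) < (s.1:ℝ) := by exact_mod_cast h1
          positivity
        -- (s.2 % m : ℝ) = s.2 - m * (s.2 / m)
        have hmod : ((s.2 % (g * s.1 ^ 2) : ℕ) : ℝ)
            = (s.2 : ℝ) - ((g : ℝ) * (s.1 : ℝ) ^ 2) * ((s.2 / (g * s.1 ^ 2) : ℕ) : ℝ) := by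
          have := Nat.mod_add_div s.2 (g * s.1 ^ 2)
          have hcast : ((s.2 % (g * s.1 ^ 2) + (g * s.1 ^ 2) * (s.2 / (g * s.1 ^ 2)) : ℕ) : ℝ)
              = (s.2 : ℝ) := by rw [this]
          push_cast at hcast
          linarith
        have : ((s.2 % (g * s.1 ^ 2) : ℕ) : ℝ) / ((g : ℝ) * (s.1 : ℝ) ^ 2) - α
            = (x s - α) + ((-((s.2 / (g * s.1 ^ 2) : ℕ) : ℤ) : ℤ) : ℝ) := by
          rw [hmod, hx]
          rw [Int.cast_neg, Int.cast_natCast]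
          field_simp
          ring
        rw [this, nint_add_int]
        exact hsnint
    calc ((F.filter (fun s => nint (x s - α) ≤ δ)).card : ℝ)
        = (((F.filter (fun s => nint (x s - α) ≤ δ)).image φ).card : ℝ) := by
          rw [Finset.card_image_of_injOn hinj]
      _ ≤ (S.ncard : ℝ) := by
          have h1 : (((F.filter (fun s => nint (x s - α) ≤ δ)).image φ : Finset (ℕ × ℕ)) : Set (ℕ × ℕ)).ncard
              = ((F.filter (fun s => nint (x s - α) ≤ δ)).image φ).card := Set.ncard_coe_finset _
          rw [← h1]
          have hsub2 : (((F.filter (fun s => nint (x s - α) ≤ δ)).image φ : Finset (ℕ × ℕ)) : Set (ℕ × ℕ)) ⊆ S :=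
            fun p hp => hsub p (Finset.mem_coe.mp hp)
          have := Set.ncard_le_ncard hsub2 hSfin
          exact_mod_cast this
      _ ≤ C * (1 + g * δ) * (Q ^ 3 * g * δ + Q ^ ((1:ℝ)/2)) * (Q / δ) ^ ε := hcount δ hδ α
  -- the Λ bound
  set A : ℝ := C * ((Q * (N:ℝ)) ^ ε) * ((1 + (g:ℝ) / N) * ((g:ℝ) * Q ^ 3 + Q ^ ((1:ℝ)/2) * N)) with hA
  have hA0 : 0 ≤ A := by
    apply mul_nonneg (mul_nonneg (le_of_lt hC) hQN)
    apply mul_nonneg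
    · positivity
    · positivity
  set Λ : ℝ := cε * A with hΛdef
  have hΛ0 : 0 ≤ Λ := mul_nonneg (le_of_lt hcε_pos) hA0
  have hΛ : ∀ r ∈ F, ∑ s ∈ F, ‖Dk (2 * N) (x r - x s)‖ ^ 2 ≤ (N : ℝ) * Λ := by
    intro r _
    -- counts
    have hdecomp : ∑ s ∈ F, ‖Dk (2 * N) (x r - x s)‖ ^ 2
        ≤ 4 * (N:ℝ) ^ 2 * ((F.filter (fun s => nint (x s - x r) ≤ 1 / N)).card : ℝ)
          + ∑ k ∈ Finset.Icc 1 N, ((N:ℝ) / 2 ^ k) ^ 2 *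
              ((F.filter (fun s => nint (x s - x r) ≤ 2 ^ k / N)).card : ℝ) := by
      calc ∑ s ∈ F, ‖Dk (2 * N) (x r - x s)‖ ^ 2
          ≤ ∑ s ∈ F, ((if nint (x s - x r) ≤ 1 / N then 4 * (N:ℝ) ^ 2 else 0)
              + ∑ k ∈ Finset.Icc 1 N, (if nint (x s - x r) ≤ 2 ^ k / N then ((N:ℝ) / 2 ^ k) ^ 2 else 0)) := by
            refine Finset.sum_le_sum fun s _ => ?_
            have hk := kernel_decomp N hN (x r - x s)
            have hnn : nint (x r - x s) = nint (x s - x r) := by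
              rw [← nint_neg (x s - x r)]
              congr 1
              ring
            rw [hnn] at hk
            exact hk
        _ = (∑ s ∈ F, (if nint (x s - x r) ≤ 1 / N then 4 * (N:ℝ) ^ 2 else 0))
            + ∑ s ∈ F, ∑ k ∈ Finset.Icc 1 N, (if nint (x s - x r) ≤ 2 ^ k / N then ((N:ℝ) / 2 ^ k) ^ 2 else 0) :=
            Finset.sum_add_distrib
        _ = 4 * (N:ℝ) ^ 2 * ((F.filter (fun s => nint (x s - x r) ≤ 1 / N)).card : ℝ)
            + ∑ k ∈ Finset.Icc 1 N, ((N:ℝ) / 2 ^ k) ^ 2 *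
                ((F.filter (fun s => nint (x s - x r) ≤ 2 ^ k / N)).card : ℝ) := by
            congr 1
            · rw [← Finset.sum_filter, Finset.sum_const, nsmul_eq_mul]
              ring
            · rw [Finset.sum_comm]
              refine Finset.sum_congr rfl fun k _ => ?_
              rw [← Finset.sum_filter, Finset.sum_const, nsmul_eq_mul]
              ring
    refine le_trans hdecomp ?_
    -- first term
    have hc1 : 4 * (N:ℝ) ^ 2 * ((F.filter (fun s => nint (x s - x r) ≤ 1 / N)).card : ℝ)
        ≤ 4 * ((N:ℝ) * A) := by
      have hb := hcard (x r) (1 / N) (by positivity)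
      have heq : (Q / (1 / N)) = Q * N := by field_simp
      rw [heq] at hb
      calc 4 * (N:ℝ) ^ 2 * ((F.filter (fun s => nint (x s - x r) ≤ 1 / N)).card : ℝ)
          ≤ 4 * (N:ℝ) ^ 2 * (C * (1 + g * (1 / N)) * (Q ^ 3 * g * (1 / N) + Q ^ ((1:ℝ)/2)) * (Q * N) ^ ε) := by
            apply mul_le_mul_of_nonneg_left hb (by positivity)
        _ = 4 * ((N:ℝ) * A) := by
            rw [hA]
            field_simp
    -- second term
    have hc2 : ∑ k ∈ Finset.Icc 1 N, ((N:ℝ) / 2 ^ k) ^ 2 *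
          ((F.filter (fun s => nint (x s - x r) ≤ 2 ^ k / N)).card : ℝ)
        ≤ ((N:ℝ) * A) * (1 / (2 ^ ε - 1)) := by
      set t : ℝ := ((2:ℝ) ^ ε)⁻¹ with ht
      have ht0 : 0 ≤ t := by positivity
      have ht1 : t < 1 := inv_lt_one_of_one_lt₀ h2e
      have hterm : ∀ k ∈ Finset.Icc 1 N, ((N:ℝ) / 2 ^ k) ^ 2 *
            ((F.filter (fun s => nint (x s - x r) ≤ 2 ^ k / N)).card : ℝ)
          ≤ ((N:ℝ) * A) * t ^ k := by
        intro k hk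
        have hδk : (0:ℝ) < 2 ^ k / N := by positivity
        have hb := hcard (x r) (2 ^ k / N) hδk
        have heq : (Q / (2 ^ k / N)) ^ ε = (Q * N) ^ ε * t ^ k := by
          rw [show Q / (2 ^ k / N) = (Q * N) / 2 ^ k by field_simp <;> ring]
          rw [Real.div_rpow (by positivity) (by positivity)]
          rw [rpow_pow 2 (by norm_num) k ε]
          rw [ht, div_eq_mul_inv, inv_pow]
        rw [heq] at hb
        have hcore : ((N:ℝ) / 2 ^ k) ^ 2 * ((1 + g * (2 ^ k / N)) * (Q ^ 3 * g * (2 ^ k / N) + Q ^ ((1:ℝ)/2)))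
            ≤ (N:ℝ) * ((1 + g / N) * (g * Q ^ 3 + Q ^ ((1:ℝ)/2) * N)) := by
          have hu : (1:ℝ) ≤ 2 ^ k := one_le_pow₀ (by norm_num)
          exact core_alg (by exact_mod_cast hN) hu (le_of_lt hgpos) (by positivity) hsqQ
        calc ((N:ℝ) / 2 ^ k) ^ 2 * ((F.filter (fun s => nint (x s - x r) ≤ 2 ^ k / N)).card : ℝ)
            ≤ ((N:ℝ) / 2 ^ k) ^ 2 * (C * (1 + g * (2 ^ k / N)) * (Q ^ 3 * g * (2 ^ k / N) + Q ^ ((1:ℝ)/2)) * ((Q * N) ^ ε * t ^ k)) := by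
              apply mul_le_mul_of_nonneg_left hb (by positivity)
          _ = (C * (Q * N) ^ ε * t ^ k) * (((N:ℝ) / 2 ^ k) ^ 2 * ((1 + g * (2 ^ k / N)) * (Q ^ 3 * g * (2 ^ k / N) + Q ^ ((1:ℝ)/2)))) := by
              ring
          _ ≤ (C * (Q * N) ^ ε * t ^ k) * ((N:ℝ) * ((1 + g / N) * (g * Q ^ 3 + Q ^ ((1:ℝ)/2) * N))) := by
              apply mul_le_mul_of_nonneg_left hcore
              have : (0:ℝ) ≤ t ^ k := by positivity
              positivity
          _ = ((N:ℝ) * A) * t ^ k := by rw [hA]; ring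
      have hgeom : ∑ k ∈ Finset.Icc 1 N, t ^ k ≤ 1 / (2 ^ ε - 1) := by
        have h1' : ∑ k ∈ Finset.Icc 1 N, t ^ k = t * ∑ i ∈ Finset.range N, t ^ i := by
          rw [← Finset.Ico_add_one_right_eq_Icc, Finset.sum_Ico_eq_sum_range]
          rw [Finset.mul_sum]
          refine Finset.sum_congr (by norm_num) fun i _ => ?_
          rw [pow_add, pow_one]
          try ring
        have h2' : ∑ i ∈ Finset.range N, t ^ i ≤ 1 / (1 - t) := geomle t ht0 ht1 N
        have h3' : t * (1 / (1 - t)) = 1 / (2 ^ ε - 1) := by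
          rw [ht]
          have h2ne : (2:ℝ) ^ ε ≠ 0 := by positivity
          field_simp
        calc ∑ k ∈ Finset.Icc 1 N, t ^ k = t * ∑ i ∈ Finset.range N, t ^ i := h1'
          _ ≤ t * (1 / (1 - t)) := mul_le_mul_of_nonneg_left h2' ht0
          _ = 1 / (2 ^ ε - 1) := h3'
      calc ∑ k ∈ Finset.Icc 1 N, ((N:ℝ) / 2 ^ k) ^ 2 *
            ((F.filter (fun s => nint (x s - x r) ≤ 2 ^ k / N)).card : ℝ)
          ≤ ∑ k ∈ Finset.Icc 1 N, ((N:ℝ) * A) * t ^ k := Finset.sum_le_sum hterm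
        _ = ((N:ℝ) * A) * ∑ k ∈ Finset.Icc 1 N, t ^ k := by rw [Finset.mul_sum]
        _ ≤ ((N:ℝ) * A) * (1 / (2 ^ ε - 1)) :=
            mul_le_mul_of_nonneg_left hgeom (by positivity)
    calc 4 * (N:ℝ) ^ 2 * ((F.filter (fun s => nint (x s - x r) ≤ 1 / N)).card : ℝ)
          + ∑ k ∈ Finset.Icc 1 N, ((N:ℝ) / 2 ^ k) ^ 2 *
              ((F.filter (fun s => nint (x s - x r) ≤ 2 ^ k / N)).card : ℝ)
        ≤ 4 * ((N:ℝ) * A) + ((N:ℝ) * A) * (1 / (2 ^ ε - 1)) := add_le_add hc1 hc2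
      _ = (N:ℝ) * Λ := by rw [hΛdef, hcε]; ring
  have := abstract_ls F x N hN a Λ hΛ0 hΛ
  refine le_trans this (le_of_eq ?_)
  rw [hΛdef, hA]
  ring
end
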